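/- Suppose the first-order condition (μ-r) - σ²π* + λ₀₁[ρ h'(g(π*))g'(π*) - L/(1-π*L)] = 0 holds, where h'(π) = -π^(λ₁₀/ρ)/(ρ(1-π^(1+λ₁₀/ρ))) and g(π) = π(1-L)/(1-πL). Then the first-order expansion of π* in λ₀₁ around π̂ = (μ-r)/σ² is π* = π̂ - λ₀₁π₁ + O(λ₀₁²) with π₁ = (1/σ²)[ L/(1-π̂L) + ((1-L)/(1-π̂L)²) · g(π̂)^(λ₁₀/ρ)/(1-g(π̂)^(1+λ₁₀/ρ)) ]. -/

import Mathlib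

/-!
Rewrite the first-order condition as the fixed-point equation `π = π̂ + λ F(π)` with
`F(π) = (ρ h'(g π) g'(π) - L/(1 - πL)) / σ²`. Since `F` is bounded near `π̂`, the solution satisfies
`π* - π̂ = O(λ)`; since `F` is differentiable at `π̂`, `π* - π̂ - λ F(π̂) = λ (F(π*) - F(π̂)) = O(λ²)`.
Finally `π₁ = -F(π̂)` is an algebraic identity.
-/

open Set Real Asymptotics Filter Topology

section FixedPoint

variable {𝕜 E : Type*} [NontriviallyNormedField 𝕜] [NormedAddCommGroup E] [NormedSpace 𝕜 E]

theorem isBigO_sub_of_eq_add_smul {l : Filter 𝕜} {F : E → E} {x : 𝕜 → E} {a : E}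
    (hF : ContinuousAt F a) (hx : Tendsto x l (𝓝 a))
    (heq : ∀ᶠ t in l, x t = a + t • F (x t)) :
    (fun t => x t - a) =O[l] id := by
  have hbdd : (fun t => F (x t)) =O[l] (fun _ => (1 : 𝕜)) :=
    (hF.tendsto.comp hx).isBigO_one 𝕜
  have hsmul := (isBigO_refl (id : 𝕜 → 𝕜) l).smul hbdd
  simp only [smul_eq_mul, mul_one] at hsmul
  refine EventuallyEq.trans_isBigO ?_ hsmul
  filter_upwards [heq] with t ht using sub_eq_iff_eq_add'.2 ht

theorem isBigO_sq_of_eq_add_smul {l : Filter 𝕜} {F : E → E} {x : 𝕜 → E} {a : E}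
    (hF : DifferentiableAt 𝕜 F a) (hx : Tendsto x l (𝓝 a))
    (heq : ∀ᶠ t in l, x t = a + t • F (x t)) :
    (fun t => x t - (a + t • F a)) =O[l] (fun t => t ^ 2) := by
  have hlin : (fun t => F (x t) - F a) =O[l] id :=
    (hF.isBigO_sub.comp_tendsto hx).trans (isBigO_sub_of_eq_add_smul hF.continuousAt hx heq)
  have hsmul := (isBigO_refl (id : 𝕜 → 𝕜) l).smul hlin
  simp only [id, smul_eq_mul, ← sq] at hsmul
  refine EventuallyEq.trans_isBigO ?_ hsmul
  filter_upwards [heq] with t ht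
  nth_rewrite 1 [ht]
  rw [smul_sub]
  abel

end FixedPoint

theorem mul_one_sub_div_one_sub_mul_mem_Ioo {L p : ℝ} (hL : L ∈ Ico (0 : ℝ) 1)
    (hp : p ∈ Ioo (0 : ℝ) 1) : p * (1 - L) / (1 - p * L) ∈ Ioo (0 : ℝ) 1 := by
  obtain ⟨hL0, hL1⟩ := hL
  obtain ⟨hp0, hp1⟩ := hp
  have hden : 0 < 1 - p * L := by nlinarith
  exact ⟨div_pos (by nlinarith) hden, (div_lt_one hden).2 (by nlinarith)⟩

theorem differentiableAt_neg_rpow_div_mul_one_sub_rpow {a b ρ q : ℝ} (hq : q ∈ Ioo (0 : ℝ) 1)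
    (hb : 0 < b) (hρ : ρ ≠ 0) :
    DifferentiableAt ℝ (fun p => -(p ^ a) / (ρ * (1 - p ^ b))) q := by
  have hq0 : q ≠ 0 := hq.1.ne'
  have hqb : q ^ b < 1 := rpow_lt_one hq.1.le hq.2 hb
  refine ((differentiableAt_id.rpow_const (Or.inl hq0)).neg).div
    ((differentiableAt_id.rpow_const (Or.inl hq0)).const_sub 1 |>.const_mul ρ) ?_
  exact mul_ne_zero hρ (sub_ne_zero.2 hqb.ne')

theorem differentiableAt_foc_term {ρ l10 L q : ℝ} {g g' h' : ℝ → ℝ} (hρ : 0 < ρ) (hl10 : 0 < l10)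
    (hL : L ∈ Ico (0 : ℝ) 1) (hq : q ∈ Ioo (0 : ℝ) 1)
    (hg : ∀ p, g p = p * (1 - L) / (1 - p * L)) (hg' : ∀ p, g' p = (1 - L) / (1 - p * L) ^ 2)
    (hh' : ∀ p, h' p = -(p ^ (l10 / ρ)) / (ρ * (1 - p ^ (1 + l10 / ρ)))) :
    DifferentiableAt ℝ (fun p => ρ * h' (g p) * g' p - L / (1 - p * L)) q := by
  have hden : 1 - q * L ≠ 0 := by nlinarith [hL.1, hL.2, hq.1, hq.2]
  have hlin : DifferentiableAt ℝ (fun p => 1 - p * L) q := by fun_prop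
  have hg_diff : DifferentiableAt ℝ g q := by
    rw [funext hg]
    exact (differentiableAt_id.mul_const _).div hlin hden
  have hg'_diff : DifferentiableAt ℝ g' q := by
    rw [funext hg']
    exact (differentiableAt_const _).div (hlin.pow 2) (pow_ne_zero 2 hden)
  have hh'_diff : DifferentiableAt ℝ h' (g q) := by
    rw [funext hh']
    exact differentiableAt_neg_rpow_div_mul_one_sub_rpow
      (hg q ▸ mul_one_sub_div_one_sub_mul_mem_Ioo hL hq) (by positivity) hρ.ne'
  exact (((hh'_diff.comp q hg_diff).const_mul ρ).mul hg'_diff).sub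
    ((differentiableAt_const _).div hlin hden)

theorem stmt_7_general (μ r σ ρ l10 L : ℝ) (hσ : 0 < σ) (hρ : 0 < ρ)
    (hl10 : 0 < l10) (hL : L ∈ Ico (0:ℝ) 1)
    (phat : ℝ) (hphat : phat = (μ - r)/σ^2) (hp : phat ∈ Ioo (0:ℝ) 1)
    (g g' h' : ℝ → ℝ)
    (hg : ∀ p, g p = p * (1-L) / (1 - p*L))
    (hg' : ∀ p, g' p = (1-L) / (1 - p*L)^2)
    (hh' : ∀ p, h' p = -(p ^ (l10/ρ)) / (ρ * (1 - p ^ (1 + l10/ρ))))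
    (p1 : ℝ)
    (hp1 : p1 = (1/σ^2) * (L/(1 - phat*L)
        + ((1-L)/(1 - phat*L)^2) * (g phat) ^ (l10/ρ) / (1 - (g phat) ^ (1 + l10/ρ))))
    (PP : ℝ → ℝ) (hcont : ContinuousAt PP 0) (h0 : PP 0 = phat)
    (hfoc : ∀ᶠ lam in nhdsWithin 0 (Ici (0:ℝ)),
      (μ - r) - σ^2 * PP lam
        + lam * (ρ * h' (g (PP lam)) * g' (PP lam) - L/(1 - PP lam * L)) = 0) :
    (fun lam => PP lam - (phat - lam * p1)) =O[nhdsWithin 0 (Ici (0:ℝ))]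
      (fun lam => lam^2) := by
  have hσ2 : σ ^ 2 ≠ 0 := pow_ne_zero 2 hσ.ne'
  have hden : 1 - phat * L ≠ 0 := by nlinarith [hL.1, hL.2, hp.1, hp.2]
  set F : ℝ → ℝ := fun p => (ρ * h' (g p) * g' p - L / (1 - p * L)) / σ ^ 2 with hF
  have hFdiff : DifferentiableAt ℝ F phat :=
    (differentiableAt_foc_term hρ hl10 hL hp hg hg' hh').div_const _
  have hp1F : p1 = -F phat := by
    rw [hp1, hF]
    simp only [hh', hg']
    field_simp
    ring
  have hfix : ∀ᶠ lam in 𝓝[Ici 0] (0 : ℝ), PP lam = phat + lam • F (PP lam) := by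
    filter_upwards [hfoc] with lam h
    simp only [hF, hphat, smul_eq_mul]
    generalize ρ * h' (g (PP lam)) * g' (PP lam) - L / (1 - PP lam * L) = G at h ⊢
    field_simp
    linear_combination -h
  have hPP : Tendsto PP (𝓝[Ici 0] 0) (𝓝 phat) :=
    h0 ▸ hcont.tendsto.mono_left nhdsWithin_le_nhds
  simpa [hp1F, smul_eq_mul, sub_eq_add_neg] using isBigO_sq_of_eq_add_smul hFdiff hPP hfix

theorem stmt_7 (μ r σ ρ l10 L : ℝ) (hμ : r < μ) (hσ : 0 < σ) (hρ : 0 < ρ)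
    (hl10 : 0 < l10) (hL : L ∈ Ico (0:ℝ) 1)
    (phat : ℝ) (hphat : phat = (μ - r)/σ^2) (hp : phat ∈ Ioo (0:ℝ) 1)
    (g g' h' : ℝ → ℝ)
    (hg : ∀ p, g p = p * (1-L) / (1 - p*L))
    (hg' : ∀ p, g' p = (1-L) / (1 - p*L)^2)
    (hh' : ∀ p, h' p = -(p ^ (l10/ρ)) / (ρ * (1 - p ^ (1 + l10/ρ))))
    (p1 : ℝ)
    (hp1 : p1 = (1/σ^2) * (L/(1 - phat*L)
        + ((1-L)/(1 - phat*L)^2) * (g phat) ^ (l10/ρ) / (1 - (g phat) ^ (1 + l10/ρ))))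
    (PP : ℝ → ℝ) (hcont : ContinuousAt PP 0) (h0 : PP 0 = phat)
    (hfoc : ∀ᶠ lam in nhdsWithin 0 (Ici (0:ℝ)),
      (μ - r) - σ^2 * PP lam
        + lam * (ρ * h' (g (PP lam)) * g' (PP lam) - L/(1 - PP lam * L)) = 0) :
    (fun lam => PP lam - (phat - lam * p1)) =O[nhdsWithin 0 (Ici (0:ℝ))]
      (fun lam => lam^2) :=
  stmt_7_general μ r σ ρ l10 L hσ hρ hl10 hL phat hphat hp g g' h' hg hg' hh' p1 hp1 PP hcont h0
    hfoc
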